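/- Let ε > 0 and define φ^ε(z) = 2z·ln(ε + |z|) for z ∈ ℂ. Then for all z₁, z₂ ∈ ℂ, |φ^ε(z₁) − φ^ε(z₂)| ≤ 2·(1 + max(|ln(ε + |z₁|)|, |ln(ε + |z₂|)|))·|z₁ − z₂|. -/

import Mathlib

/-!
Write `L z = log (ε + ‖z‖)`. Then `L x • x - L y • y = L x • (x - y) + (L x - L y) • y`.
The first term is bounded by `|L x| ‖x - y‖`. For the second, when `‖y‖ ≤ ‖x‖`, the inequality
`log u ≤ u - 1` gives `‖y‖ (L x - L y) ≤ (ε + ‖y‖) (L x - L y) ≤ ‖x‖ - ‖y‖ ≤ ‖x - y‖`.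
-/

open Real

theorem Real.mul_log_sub_log_le_sub {a b : ℝ} (ha : 0 < a) (hb : 0 < b) :
    b * (log a - log b) ≤ a - b := by
  have h : log (a / b) ≤ a / b - 1 := log_le_sub_one_of_pos (div_pos ha hb)
  rw [log_div ha.ne' hb.ne'] at h
  calc b * (log a - log b) ≤ b * (a / b - 1) := mul_le_mul_of_nonneg_left h hb.le
    _ = a - b := by field_simp

theorem Real.mul_log_add_sub_log_add_le {ε s t : ℝ} (hε : 0 < ε) (hs : 0 ≤ s) (hst : s ≤ t) :
    s * (log (ε + t) - log (ε + s)) ≤ t - s := by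
  have hlog : 0 ≤ log (ε + t) - log (ε + s) :=
    sub_nonneg.mpr (log_le_log (by linarith) (by linarith))
  calc s * (log (ε + t) - log (ε + s)) ≤ (ε + s) * (log (ε + t) - log (ε + s)) :=
        mul_le_mul_of_nonneg_right (by linarith) hlog
    _ ≤ (ε + t) - (ε + s) := mul_log_sub_log_le_sub (by linarith) (by linarith)
    _ = t - s := by ring

theorem norm_log_add_norm_smul_sub_le {E : Type*} [SeminormedAddCommGroup E] [NormedSpace ℝ E]
    {ε : ℝ} (hε : 0 < ε) (x y : E) :
    ‖log (ε + ‖x‖) • x - log (ε + ‖y‖) • y‖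
      ≤ (1 + max |log (ε + ‖x‖)| |log (ε + ‖y‖)|) * ‖x - y‖ := by
  wlog h : ‖y‖ ≤ ‖x‖ generalizing x y
  · rw [norm_sub_rev, norm_sub_rev x, max_comm]
    exact this y x (le_of_not_ge h)
  set Lx := log (ε + ‖x‖)
  set Ly := log (ε + ‖y‖)
  have hdiff : ‖y‖ * |Lx - Ly| ≤ ‖x - y‖ := by
    rw [abs_of_nonneg (sub_nonneg.mpr (log_le_log (by positivity) (by linarith)))]
    exact (mul_log_add_sub_log_add_le hε (norm_nonneg y) h).trans (norm_sub_norm_le x y)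
  calc ‖Lx • x - Ly • y‖ = ‖Lx • (x - y) + (Lx - Ly) • y‖ := by
        rw [smul_sub, sub_smul, sub_add_sub_cancel]
    _ ≤ |Lx| * ‖x - y‖ + |Lx - Ly| * ‖y‖ := by
        simpa only [norm_smul, Real.norm_eq_abs] using norm_add_le (Lx • (x - y)) ((Lx - Ly) • y)
    _ ≤ max |Lx| |Ly| * ‖x - y‖ + ‖x - y‖ := by
        gcongr
        · exact le_max_left _ _
        · linarith
    _ = (1 + max |Lx| |Ly|) * ‖x - y‖ := by ring

theorem stmt_3 (ε : ℝ) (hε : 0 < ε) (z₁ z₂ : ℂ) :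
    ‖2 * z₁ * (Real.log (ε + ‖z₁‖) : ℂ)
        - 2 * z₂ * (Real.log (ε + ‖z₂‖) : ℂ)‖
      ≤ 2 * (1 + max |Real.log (ε + ‖z₁‖)| |Real.log (ε + ‖z₂‖)|)
        * ‖z₁ - z₂‖ := by
  have h : 2 * z₁ * (Real.log (ε + ‖z₁‖) : ℂ) - 2 * z₂ * (Real.log (ε + ‖z₂‖) : ℂ)
      = 2 * (Real.log (ε + ‖z₁‖) • z₁ - Real.log (ε + ‖z₂‖) • z₂) := by
    simp only [Complex.real_smul]
    ring
  rw [h, norm_mul, Complex.norm_two, mul_assoc]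
  gcongr
  exact norm_log_add_norm_smul_sub_le hε z₁ z₂
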